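/- Let Φ ∈ ℝ^{M×N} have restricted isometry constant δ := δ_{K'+K} < 1 of order K'+K, let x ∈ ℝ^N be K-sparse, y = Φx, let Λ' ⊆ {1,…,N} with |Λ'| = K', and let x' be a least-squares estimate of y on Λ'. Then ‖x' − x‖² ≤ ‖(x' − x)_{Λ̄'}‖² / (1 − δ²). -/

import Mathlib

/-! Write `h = x' - x` and `g = h_{Λ'}`. The normal equations of least squares on `Λ'` give
`⟪Φ g, Φ h⟫ = 0`, while `⟪g, h⟫ = ‖g‖²`. Both `g` and `h` are supported on `Λ' ∪ supp x`, of
size at most `K' + K`, and by polarization the RIP bounds `|⟪u, v⟫ - ⟪Φ u, Φ v⟫| ≤ δ ‖u‖ ‖v‖`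
there. Hence `‖g‖² ≤ δ ‖g‖ ‖h‖`, i.e. `‖g‖ ≤ δ ‖h‖`, and Pythagoras
`‖h‖² = ‖g‖² + ‖h_{Λ̄'}‖²` gives `(1 - δ²) ‖h‖² ≤ ‖h_{Λ̄'}‖²`. -/

open Finset

noncomputable section

/-- The Euclidean (ℓ₂) norm of a vector in `Fin n → ℝ`. -/
def l2norm {n : ℕ} (v : Fin n → ℝ) : ℝ := Real.sqrt (∑ i, (v i) ^ 2)

/-- The sparsity `‖v‖₀` of a vector: the number of its nonzero entries. -/
def sparsity {n : ℕ} (v : Fin n → ℝ) : ℕ := (Finset.univ.filter fun i => v i ≠ 0).card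

/-- The support of a vector, as a `Finset`. -/
def suppF {n : ℕ} (v : Fin n → ℝ) : Finset (Fin n) := Finset.univ.filter fun i => v i ≠ 0

/-- `restr v S` is the vector agreeing with `v` on `S` and zero outside `S`. -/
def restr {n : ℕ} (v : Fin n → ℝ) (S : Finset (Fin n)) : Fin n → ℝ :=
  fun i => if i ∈ S then v i else 0

/-- `Φ` has restricted isometry constant `δ < 1` of order `s`:
`(1-δ)‖z‖² ≤ ‖Φz‖² ≤ (1+δ)‖z‖²` for every `s`-sparse `z`. -/
def HasRIC {M N : ℕ} (Φ : Matrix (Fin M) (Fin N) ℝ) (s : ℕ) (δ : ℝ) : Prop :=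
  δ < 1 ∧ ∀ z : Fin N → ℝ, sparsity z ≤ s →
    (1 - δ) * (l2norm z) ^ 2 ≤ (l2norm (Φ.mulVec z)) ^ 2 ∧
      (l2norm (Φ.mulVec z)) ^ 2 ≤ (1 + δ) * (l2norm z) ^ 2

/-- `Λ` is a top-`k` support of `v`: `|Λ| = k` and every entry of `v` inside `Λ`
dominates (in magnitude) every entry outside `Λ`. -/
def IsTopSupport {n : ℕ} (v : Fin n → ℝ) (k : ℕ) (Λ : Finset (Fin n)) : Prop :=
  Λ.card = k ∧ ∀ i ∈ Λ, ∀ j ∉ Λ, |v j| ≤ |v i|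

/-- `x'` is a least-squares estimate of `y` on the support `Λ`. -/
def IsLSE {M N : ℕ} (Φ : Matrix (Fin M) (Fin N) ℝ) (y : Fin M → ℝ)
    (Λ : Finset (Fin N)) (x' : Fin N → ℝ) : Prop :=
  suppF x' ⊆ Λ ∧ ∀ z : Fin N → ℝ, suppF z ⊆ Λ →
    l2norm (y - Φ.mulVec x') ≤ l2norm (y - Φ.mulVec z)

open Matrix

lemma dotProduct_self_nonneg {ι R : Type*} [Fintype ι] [Ring R] [LinearOrder R]
    [IsStrictOrderedRing R] (v : ι → R) : 0 ≤ v ⬝ᵥ v :=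
  Fintype.sum_nonneg fun i => mul_self_nonneg (v i)

section Vectors

variable {n : ℕ}

lemma l2norm_eq_sqrt_dotProduct (v : Fin n → ℝ) : l2norm v = √(v ⬝ᵥ v) := by
  simp only [l2norm, dotProduct, sq]

lemma l2norm_nonneg (v : Fin n → ℝ) : 0 ≤ l2norm v := Real.sqrt_nonneg _

lemma l2norm_sq (v : Fin n → ℝ) : l2norm v ^ 2 = v ⬝ᵥ v := by
  rw [l2norm_eq_sqrt_dotProduct, Real.sq_sqrt (dotProduct_self_nonneg v)]

lemma l2norm_eq_zero {v : Fin n → ℝ} : l2norm v = 0 ↔ v = 0 := by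
  rw [l2norm_eq_sqrt_dotProduct, Real.sqrt_eq_zero (dotProduct_self_nonneg v),
    dotProduct_self_eq_zero]

lemma dotProduct_self_le_of_l2norm_le {u v : Fin n → ℝ} (h : l2norm u ≤ l2norm v) :
    u ⬝ᵥ u ≤ v ⬝ᵥ v := by
  rw [← l2norm_sq, ← l2norm_sq]
  exact pow_le_pow_left₀ (l2norm_nonneg u) h 2

lemma suppF_subset_iff {v : Fin n → ℝ} {S : Finset (Fin n)} :
    suppF v ⊆ S ↔ ∀ i ∉ S, v i = 0 := by
  simp only [suppF, subset_iff, mem_filter, mem_univ, true_and]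
  exact forall_congr' fun i => not_imp_comm

lemma sparsity_le_card_of_suppF_subset {v : Fin n → ℝ} {S : Finset (Fin n)}
    (h : suppF v ⊆ S) : sparsity v ≤ S.card :=
  card_le_card h

lemma suppF_sub_subset (u v : Fin n → ℝ) : suppF (u - v) ⊆ suppF u ∪ suppF v := by
  intro i
  simp only [suppF, mem_union, mem_filter, mem_univ, true_and, Pi.sub_apply]
  contrapose!
  rintro ⟨hu, hv⟩
  rw [hu, hv, sub_zero]

lemma suppF_restr_subset (v : Fin n → ℝ) (S : Finset (Fin n)) :
    suppF (restr v S) ⊆ S :=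
  suppF_subset_iff.2 fun _ hi => if_neg hi

lemma restr_add_restr_compl (v : Fin n → ℝ) (S : Finset (Fin n)) :
    restr v S + restr v Sᶜ = v := by
  ext i
  by_cases hi : i ∈ S <;> simp [restr, hi]

lemma restr_dotProduct_restr_compl (u v : Fin n → ℝ) (S : Finset (Fin n)) :
    restr u S ⬝ᵥ restr v Sᶜ = 0 := by
  refine sum_eq_zero fun i _ => ?_
  by_cases hi : i ∈ S <;> simp [restr, hi]

lemma l2norm_sq_eq_restr_add_restr_compl (v : Fin n → ℝ) (S : Finset (Fin n)) :
    l2norm v ^ 2 = l2norm (restr v S) ^ 2 + l2norm (restr v Sᶜ) ^ 2 := by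
  conv_lhs => rw [← restr_add_restr_compl v S]
  simp only [l2norm_sq, add_dotProduct, dotProduct_add, restr_dotProduct_restr_compl,
    dotProduct_comm (restr v Sᶜ) (restr v S)]
  ring

end Vectors

lemma IsLSE.residual_dotProduct_mulVec_eq_zero {M N : ℕ} {Φ : Matrix (Fin M) (Fin N) ℝ}
    {y : Fin M → ℝ} {Λ : Finset (Fin N)} {x' z : Fin N → ℝ} (hx' : IsLSE Φ y Λ x')
    (hz : suppF z ⊆ Λ) : (Φ *ᵥ x' - y) ⬝ᵥ Φ *ᵥ z = 0 := by
  set r := Φ *ᵥ x' - y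
  set w := Φ *ᵥ z
  -- optimality along the line `x' + t z` makes this quadratic in `t` nonnegative
  have hmin : ∀ t : ℝ, 0 ≤ (w ⬝ᵥ w) * (t * t) + 2 * (r ⬝ᵥ w) * t + 0 := by
    intro t
    have hsupp : suppF (x' + t • z) ⊆ Λ := by
      rw [suppF_subset_iff] at hz ⊢
      intro i hi
      simp [suppF_subset_iff.1 hx'.1 i hi, hz i hi]
    have hle := dotProduct_self_le_of_l2norm_le (hx'.2 _ hsupp)
    have hres : y - Φ *ᵥ (x' + t • z) = -(r + t • w) := by
      simp only [r, w, mulVec_add, mulVec_smul]; abel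
    rw [hres, show y - Φ *ᵥ x' = -r from (neg_sub _ _).symm] at hle
    simp only [neg_dotProduct, dotProduct_neg, neg_neg, add_dotProduct, dotProduct_add,
      smul_dotProduct, dotProduct_smul, smul_eq_mul, dotProduct_comm w r] at hle
    linarith
  have := discrim_le_zero hmin
  rw [discrim] at this
  nlinarith [sq_nonneg (r ⬝ᵥ w)]

lemma HasRIC.dotProduct_sub_dotProduct_mulVec_le {M N s : ℕ} {Φ : Matrix (Fin M) (Fin N) ℝ}
    {δ : ℝ} (hΦ : HasRIC Φ s δ) {S : Finset (Fin N)} (hS : S.card ≤ s) {u v : Fin N → ℝ}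
    (hu : suppF u ⊆ S) (hv : suppF v ⊆ S) :
    u ⬝ᵥ v - Φ *ᵥ u ⬝ᵥ Φ *ᵥ v ≤ δ * l2norm u * l2norm v := by
  set a := l2norm u
  set b := l2norm v
  have hsparse : ∀ c : ℝ, sparsity (b • u + c • v) ≤ s := by
    intro c
    refine (sparsity_le_card_of_suppF_subset ?_).trans hS
    rw [suppF_subset_iff] at hu hv ⊢
    intro i hi
    simp [hu i hi, hv i hi]
  -- polarization: compare the RIP bounds for `‖v‖ u + ‖u‖ v` and `‖v‖ u - ‖u‖ v`
  have hlow := (hΦ.2 _ (hsparse a)).1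
  have hup := (hΦ.2 _ (hsparse (-a))).2
  have ha : a ^ 2 = u ⬝ᵥ u := l2norm_sq u
  have hb : b ^ 2 = v ⬝ᵥ v := l2norm_sq v
  simp only [l2norm_sq, mulVec_add, mulVec_smul, add_dotProduct, dotProduct_add,
    smul_dotProduct, dotProduct_smul, smul_eq_mul, dotProduct_comm v u,
    dotProduct_comm (Φ *ᵥ v) (Φ *ᵥ u)] at hlow hup
  have hab : a * b * (u ⬝ᵥ v - Φ *ᵥ u ⬝ᵥ Φ *ᵥ v - δ * a * b) ≤ 0 := by
    rw [← ha, ← hb] at hlow hup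
    nlinarith
  rcases (mul_nonneg (l2norm_nonneg u) (l2norm_nonneg v)).eq_or_lt with h0 | hpos
  · rcases mul_eq_zero.1 h0.symm with h | h
    · rw [show a = 0 from h, l2norm_eq_zero.1 h]; simp
    · rw [show b = 0 from h, l2norm_eq_zero.1 h]; simp
  · nlinarith

/-- for a least-squares estimate `x'` of `y = Φx` on a support `Λ'`
of size `K'`, one has `‖x' − x‖² ≤ ‖(x' − x)_{Λ̄'}‖² / (1 − δ²)`. -/
theorem lse_error_restrict_bound {M N : ℕ} (Φ : Matrix (Fin M) (Fin N) ℝ)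
    (K K' : ℕ) (δ : ℝ) (hRIC : HasRIC Φ (K' + K) δ) (hδ0 : 0 ≤ δ)
    (x : Fin N → ℝ) (hx : sparsity x ≤ K)
    (y : Fin M → ℝ) (hy : y = Φ.mulVec x)
    (Λ' : Finset (Fin N)) (hΛ' : Λ'.card = K')
    (x' : Fin N → ℝ) (hx' : IsLSE Φ y Λ' x') :
    (l2norm (x' - x)) ^ 2 ≤ (l2norm (restr (x' - x) Λ'ᶜ)) ^ 2 / (1 - δ ^ 2) := by
  set h := x' - x
  set g := restr h Λ'
  have hcard : (Λ' ∪ suppF x).card ≤ K' + K := (card_union_le _ _).trans (add_le_add hΛ'.le hx)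
  have hg : suppF g ⊆ Λ' := suppF_restr_subset h Λ'
  have hh : suppF h ⊆ Λ' ∪ suppF x :=
    (suppF_sub_subset x' x).trans (union_subset_union_left hx'.1)
  have horth : Φ *ᵥ g ⬝ᵥ Φ *ᵥ h = 0 := by
    rw [dotProduct_comm, show Φ *ᵥ h = Φ *ᵥ x' - y by rw [hy, mulVec_sub]]
    exact hx'.residual_dotProduct_mulVec_eq_zero hg
  have hgh : g ⬝ᵥ h = l2norm g ^ 2 := by
    conv_lhs => rw [← restr_add_restr_compl h Λ']
    rw [dotProduct_add, restr_dotProduct_restr_compl, add_zero, l2norm_sq]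
  have hnear := hRIC.dotProduct_sub_dotProduct_mulVec_le hcard (hg.trans subset_union_left) hh
  rw [horth, sub_zero, hgh] at hnear
  have hg_le : l2norm g ^ 2 ≤ δ ^ 2 * l2norm h ^ 2 := by
    rcases (l2norm_nonneg g).eq_or_lt with h0 | hpos
    · rw [← h0, zero_pow two_ne_zero]; positivity
    · have : l2norm g ≤ δ * l2norm h := by nlinarith
      nlinarith
  have hpyth := l2norm_sq_eq_restr_add_restr_compl h Λ'
  have hδ : 0 < 1 - δ ^ 2 := by nlinarith [hRIC.1]
  rw [le_div_iff₀ hδ]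
  linarith
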